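/- arXiv:2503.21028 — 4 statements merged into one kernel-verified Lean document; each statement's English description precedes it below -/
import Mathlib

section
/- Let K be a real algebraic number field of degree d = s + 2t ≥ 2, where s ≥ 1 is the number of real embeddings and 2t the number of non-real embeddings, and let σ_1, ..., σ_{s+t} be a system of embeddings of K into ℂ with σ_1 the identity, σ_2, ..., σ_s the other real embeddings, and σ_{s+1}, ..., σ_{s+t} one representative from each pair of complex-conjugate non-real embeddings. Let (x_2, ..., x_{s+t}) ∈ ℝ^{s-1} × ℂ^t with |x_j| < 1 for all j ∈ {2, ..., s+t}, and let ε > 0 be small enough that |x_j| + ε < 1 for all j ∈ {2, ..., s+t}. Then there exists a positive constant c, depending only on K and ε, such that for every x_1 ∈ ℝ the interval [x_1 - c, x_1 + c] contains an algebraic integer θ ∈ K with |x_j - σ_j(θ)| ≤ ε for every j ∈ {2, ..., s+t}. -/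
/-!
By Minkowski's theorem there is a nonzero algebraic integer `α` that is arbitrarily small at every
infinite place other than the one of the identity embedding. In the mixed space `ℝ^s × ℂ^t`, the
lattice `α 𝓞_K` is `𝓞_K` scaled placewise by the embeddings of `α`, so rounding coordinates in an
integral basis approximates any point by it to within `w(α) C` at each place `w`, where `C` depends
only on `K`. Taking `w(α) < ε / C` away from the identity place gives the `ε`-approximation at
`σ_2, …, σ_{s+t}`, and `c = |α| C` at the identity.
-/

open IntermediateField

/-- The "identity" embedding of a real number field `K ⊆ ℝ` into `ℂ`. -/
noncomputable def iotaK (K : IntermediateField ℚ ℝ) : ↥K →+* ℂ :=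
  Complex.ofRealHom.comp (algebraMap ↥K ℝ)

open NumberField InfinitePlace mixedEmbedding ComplexEmbedding
open scoped ComplexConjugate

namespace NumberField.mixedEmbedding

variable {K : Type*} [Field K]

theorem normAtPlace_commMap_mk {x : (K →+* ℂ) → ℂ} (hx : ∀ φ, x (conjugate φ) = conj (x φ))
    (φ : K →+* ℂ) : normAtPlace (InfinitePlace.mk φ) (commMap K x) = ‖x φ‖ := by
  have h_emb : ‖x (InfinitePlace.mk φ).embedding‖ = ‖x φ‖ := by
    rcases embedding_mk_eq φ with h | h <;> simp [h, hx]
  by_cases hw : IsReal (InfinitePlace.mk φ)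
  · have h_real : conj (x (InfinitePlace.mk φ).embedding) = x (InfinitePlace.mk φ).embedding := by
      rw [← hx, ComplexEmbedding.isReal_iff.mp (InfinitePlace.isReal_iff.mp hw)]
    rw [normAtPlace_apply_of_isReal hw, commMap_apply_of_isReal, ← h_emb,
      ← Complex.norm_real, Complex.conj_eq_iff_re.mp h_real]
  · rw [normAtPlace_apply_of_isComplex (not_isReal_iff_isComplex.mp hw), commMap_apply_of_isComplex,
      h_emb]

variable [NumberField K]

theorem exists_ne_zero_mem_ringOfIntegers_lt_of_ne (w₀ : InfinitePlace K) {δ : ℝ} (hδ : 0 < δ) :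
    ∃ α : 𝓞 K, α ≠ 0 ∧ ∀ w ≠ w₀, w α < δ := by
  obtain ⟨B, hB⟩ := ENNReal.exists_nat_mul_gt (a := convexBodyLTFactor K)
    (by exact_mod_cast convexBodyLTFactor_ne_zero K)
    (minkowskiBound_lt_top K 1).ne
  -- The factor at `w₀` absorbs whatever volume is needed for Minkowski's theorem.
  obtain ⟨g, hg, hg_prod⟩ := adjust_f K (f := fun _ ↦ δ.toNNReal) (w₁ := w₀) B
    fun _ _ ↦ (Real.toNNReal_pos.mpr hδ).ne'
  obtain ⟨α, hα, hα_lt⟩ := exists_ne_zero_mem_ringOfIntegers_lt K (f := g) (by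
    rw [convexBodyLT_volume, hg_prod, mul_comm]; exact hB)
  refine ⟨α, hα, fun w hw ↦ ?_⟩
  simpa [hg w hw, hδ.le] using hα_lt w

open scoped Classical in
theorem normAtPlace_le_norm (w : InfinitePlace K) (x : mixedSpace K) :
    normAtPlace w x ≤ ‖x‖ := by
  rw [norm_eq_sup'_normAtPlace]
  exact Finset.le_sup' (fun w ↦ normAtPlace w x) (Finset.mem_univ w)

theorem exists_normAtPlace_sub_mixedEmbedding_mul_le :
    ∃ C > 0, ∀ α : K, α ≠ 0 → ∀ y : mixedSpace K, ∃ β : 𝓞 K,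
      ∀ w, normAtPlace w (y - mixedEmbedding K (α * β)) ≤ w α * C := by
  classical
  set b := latticeBasis K
  refine ⟨∑ i, ‖b i‖ + 1, by positivity, fun α hα y ↦ ?_⟩
  set z := mixedEmbedding K α⁻¹ * y
  obtain ⟨β, hβ⟩ : ∃ β : 𝓞 K, mixedEmbedding K β = ZSpan.floor b z :=
    (mem_span_latticeBasis K).mp (ZSpan.floor b z).2
  have h_sub : y - mixedEmbedding K (α * β) = mixedEmbedding K α * ZSpan.fract b z := by
    rw [ZSpan.fract_apply, mul_sub, ← mul_assoc, ← map_mul, mul_inv_cancel₀ hα, map_one, one_mul,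
      ← hβ, map_mul]
  refine ⟨β, fun w ↦ ?_⟩
  rw [h_sub, map_mul, normAtPlace_apply]
  gcongr
  calc normAtPlace w (ZSpan.fract b z) ≤ ‖ZSpan.fract b z‖ := normAtPlace_le_norm w _
    _ ≤ ∑ i, ‖b i‖ := ZSpan.norm_fract_le b z
    _ ≤ ∑ i, ‖b i‖ + 1 := by linarith

end NumberField.mixedEmbedding

namespace NumberField

variable {K : Type*} [Field K]

theorem ComplexEmbedding.update_apply_conjugate [DecidableEq (K →+* ℂ)] {x : (K →+* ℂ) → ℂ}
    (hx : ∀ φ, x (conjugate φ) = conj (x φ)) {ι : K →+* ℂ} (hι : ComplexEmbedding.IsReal ι) (a : ℝ)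
    (φ : K →+* ℂ) :
    Function.update x ι a (conjugate φ) = conj (Function.update x ι a φ) := by
  have hι' : conjugate ι = ι := ComplexEmbedding.isReal_iff.mp hι
  by_cases h : φ = ι
  · simp [h, hι']
  · have h' : conjugate φ ≠ ι := fun h' ↦ h (star_injective (h'.trans hι'.symm))
    simp [Function.update_of_ne h, Function.update_of_ne h', hx]

variable [NumberField K]

theorem exists_ringOfIntegers_norm_sub_le_of_isReal {ι : K →+* ℂ} (hι : ComplexEmbedding.IsReal ι)
    {ε : ℝ} (hε : 0 < ε) :
    ∃ c > 0, ∀ x : (K →+* ℂ) → ℂ, (∀ φ, x (conjugate φ) = conj (x φ)) →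
      ∃ θ : 𝓞 K, ‖x ι - ι θ‖ ≤ c ∧ ∀ σ ≠ ι, ‖x σ - σ θ‖ ≤ ε := by
  obtain ⟨C, hC, h_cover⟩ := exists_normAtPlace_sub_mixedEmbedding_mul_le (K := K)
  obtain ⟨α, hα, hα_lt⟩ :=
    exists_ne_zero_mem_ringOfIntegers_lt_of_ne (InfinitePlace.mk ι) (div_pos hε hC)
  have hα' : (α : K) ≠ 0 := RingOfIntegers.coe_ne_zero_iff.mpr hα
  refine ⟨InfinitePlace.mk ι α * C, mul_pos (pos_iff.mpr hα') hC, fun x hx ↦ ?_⟩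
  obtain ⟨β, hβ⟩ := h_cover α hα' (commMap K x)
  have h_err (σ : K →+* ℂ) : ‖x σ - σ (α * β : 𝓞 K)‖ ≤ InfinitePlace.mk σ α * C := by
    have h_conj : ∀ φ, (x - canonicalEmbedding K (α * β)) (conjugate φ) =
        conj ((x - canonicalEmbedding K (α * β)) φ) := fun φ ↦ by
      simp [hx, conjugate_coe_eq]
    calc ‖x σ - σ (α * β : 𝓞 K)‖
        = normAtPlace (InfinitePlace.mk σ) (commMap K x - mixedEmbedding K (α * β)) := by
          rw [← commMap_canonical_eq_mixed, ← map_sub, normAtPlace_commMap_mk h_conj]; rfl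
      _ ≤ InfinitePlace.mk σ α * C := hβ _
  refine ⟨α * β, h_err ι, fun σ hσ ↦ (h_err σ).trans ?_⟩
  have h_place : InfinitePlace.mk σ ≠ InfinitePlace.mk ι := by
    intro h
    rcases mk_eq_iff.mp h with h_eq | h_conj
    · exact hσ h_eq
    · exact hσ (star_injective (h_conj.trans (ComplexEmbedding.isReal_iff.mp hι).symm))
  exact ((lt_div_iff₀ hC).mp (hα_lt _ h_place)).le

end NumberField

theorem isReal_iotaK (K : IntermediateField ℚ ℝ) : ComplexEmbedding.IsReal (iotaK K) := by
  rw [ComplexEmbedding.isReal_iff]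
  ext
  exact Complex.conj_ofReal _

theorem pisot_target_approx_general (K : IntermediateField ℚ ℝ) [FiniteDimensional ℚ K]
    (ε : ℝ) (hε : 0 < ε) :
    ∃ c : ℝ, 0 < c ∧
      ∀ x : (↥K →+* ℂ) → ℂ,
        (∀ σ : ↥K →+* ℂ, σ ≠ iotaK K → ‖x σ‖ + ε < 1) →
        (∀ σ : ↥K →+* ℂ, x ((starRingEnd ℂ).comp σ) = starRingEnd ℂ (x σ)) →
        ∀ x₁ : ℝ, ∃ θ : ↥K, IsIntegral ℤ θ ∧ |x₁ - (θ : ℝ)| ≤ c ∧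
          ∀ σ : ↥K →+* ℂ, σ ≠ iotaK K → ‖x σ - σ θ‖ ≤ ε := by
  classical
  have : NumberField K := ⟨⟩
  obtain ⟨c, hc, h_approx⟩ := exists_ringOfIntegers_norm_sub_le_of_isReal (isReal_iotaK K) hε
  refine ⟨c, hc, fun x _ hx x₁ ↦ ?_⟩
  obtain ⟨θ, h_iota, h_other⟩ := h_approx (Function.update x (iotaK K) x₁)
    (ComplexEmbedding.update_apply_conjugate hx (isReal_iotaK K) x₁)
  refine ⟨θ, θ.isIntegral_coe, ?_, fun σ hσ ↦ ?_⟩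
  · simpa [iotaK, ← Complex.ofReal_sub] using h_iota
  · simpa [Function.update_of_ne hσ] using h_other σ hσ

/-- **Theorem 1.** Let `K` be a real number field of degree `d = s + 2t ≥ 2`.  A target
vector `(x_2, …, x_{s+t}) ∈ ℝ^{s-1} × ℂ^t` is encoded as a function `x` assigning to each
embedding `σ : K →+* ℂ` a complex number, compatible with complex conjugation
(`x (conj ∘ σ) = conj (x σ)`); this forces `x σ ∈ ℝ` for real embeddings `σ` and makes the
data of `x` on the embeddings `≠` identity exactly a point of `ℝ^{s-1} × ℂ^t`.  If
`|x σ| + ε < 1` for every embedding `σ` other than the identity (so that the closed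
`ε`-balls around the targets lie in the open unit disc), then there is a constant
`c = c(K, ε) > 0` such that every interval `[x₁ - c, x₁ + c]` contains an algebraic
integer `θ ∈ K` with `|x σ - σ θ| ≤ ε` for every embedding `σ` other than the identity. -/
theorem pisot_target_approx (K : IntermediateField ℚ ℝ) [FiniteDimensional ℚ K]
    (hd : 2 ≤ Module.finrank ℚ ↥K) (ε : ℝ) (hε : 0 < ε) :
    ∃ c : ℝ, 0 < c ∧
      ∀ x : (↥K →+* ℂ) → ℂ,
        (∀ σ : ↥K →+* ℂ, σ ≠ iotaK K → ‖x σ‖ + ε < 1) →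
        (∀ σ : ↥K →+* ℂ, x ((starRingEnd ℂ).comp σ) = starRingEnd ℂ (x σ)) →
        ∀ x₁ : ℝ, ∃ θ : ↥K, IsIntegral ℤ θ ∧ |x₁ - (θ : ℝ)| ≤ c ∧
          ∀ σ : ↥K →+* ℂ, σ ≠ iotaK K → ‖x σ - σ θ‖ ≤ ε :=
  pisot_target_approx_general K ε hε
end

section
/- Let K be a real algebraic number field of degree d with embeddings σ_1 = id, σ_2, ..., σ_d into ℂ. Then E_K = D_K, where E_K := {β ∈ Z_K : β > 0 and |σ_j(β)| < 2 for all j ∈ {2, ..., d}} and D_K is the set of all positive differences θ' - θ with θ, θ' ∈ ℘_K and θ' > θ. Equivalently, the set of differences ℘_K - ℘_K equals (-E_K) ∪ {0} ∪ E_K. -/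
/-!
For `β ∈ E_K` take a Pisot unit `v` of `K` with `v ≡ 1 mod 2`: a unit from Dirichlet's theorem
that is large at the identity place and small at all others, raised to a power that is trivial
in `(𝓞 K ⧸ 2)ˣ` (for `K = ℚ`, take `v = 3`). Then `θₙ = β (vⁿ - 1) / 2` and
`θₙ + β = β (vⁿ + 1) / 2` are algebraic integers with `θₙ → ∞`, while each other conjugate has
modulus at most `|σ β| (|σ v|ⁿ + 1) / 2 → |σ β| / 2 < 1`; so both are Pisot numbers for large `n`.
Such a Pisot number generates `K`, since no other embedding can fix it. Conversely, a difference of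
two Pisot numbers of `K` has all other conjugates of modulus less than `1 + 1`.
-/

open IntermediateField Pointwise

/-- `℘_K`: the set of Pisot numbers `θ ∈ K` with `ℚ(θ) = K`. -/
def pisotGen (K : IntermediateField ℚ ℝ) : Set ↥K :=
  {θ | IsIntegral ℤ θ ∧ 1 < (θ : ℝ) ∧
    IntermediateField.adjoin ℚ ({θ} : Set ↥K) = ⊤ ∧
    ∀ σ : ↥K →+* ℂ, σ ≠ iotaK K → ‖σ θ‖ < 1}

/-- `E_K`: the positive algebraic integers of `K` whose images under all embeddings of `K`
into `ℂ` other than the identity have modulus less than `2`. -/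
def EK (K : IntermediateField ℚ ℝ) : Set ↥K :=
  {β | IsIntegral ℤ β ∧ 0 < (β : ℝ) ∧
    ∀ σ : ↥K →+* ℂ, σ ≠ iotaK K → ‖σ β‖ < 2}

/-- `D_K`: the set of positive differences of elements of `℘_K`. -/
def DK (K : IntermediateField ℚ ℝ) : Set ↥K :=
  {β | ∃ θ ∈ pisotGen K, ∃ θ' ∈ pisotGen K, (θ : ℝ) < (θ' : ℝ) ∧ β = θ' - θ}

open NumberField InfinitePlace Filter

section primitive

variable {F : Type*} [Field F] [NumberField F]

theorem adjoin_simple_eq_top_of_norm_lt (φ : F →+* ℂ) {θ : F}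
    (h : ∀ σ : F →+* ℂ, σ ≠ φ → ‖σ θ‖ < ‖φ θ‖) : ℚ⟮θ⟯ = ⊤ := by
  rw [Field.primitive_element_iff_algHom_eq_of_eval ℚ ℂ (fun _ => IsAlgClosed.splits _) θ
    φ.toRatAlgHom]
  intro ψ hψ
  by_contra hne
  have hσ : (ψ : F →+* ℂ) ≠ φ := fun h' => hne (by ext x; exact congrArg (· x) h'.symm)
  exact (h ψ hσ).ne (congrArg norm hψ.symm)

theorem exists_unit_one_lt_and_forall_lt_one {w₁ w₂ : InfinitePlace F} (h : w₂ ≠ w₁) :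
    ∃ u : (𝓞 F)ˣ, 1 < w₁ u ∧ ∀ w, w ≠ w₁ → w u < 1 := by
  obtain ⟨u, hu⟩ := NumberField.Units.dirichletUnitTheorem.exists_unit F w₁
  have hu₀ : (u : F) ≠ 0 := NumberField.Units.coe_ne_zero u
  have hlt : ∀ w, w ≠ w₁ → w u < 1 := fun w hw =>
    (Real.log_neg_iff (pos_iff.mpr hu₀)).mp (hu w hw)
  refine ⟨u, not_le.mp fun hle => ?_, hlt⟩
  have : ∏ w : InfinitePlace F, w u ^ mult w < ∏ _w : InfinitePlace F, 1 := by
    refine Finset.prod_lt_prod (fun w _ => pow_pos (pos_iff.mpr hu₀) _) (fun w _ => ?_)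
      ⟨w₂, Finset.mem_univ _, pow_lt_one₀ (apply_nonneg _ _) (hlt w₂ h) mult_ne_zero⟩
    refine pow_le_one₀ (apply_nonneg _ _) ?_
    by_cases hw : w = w₁
    · exact hw ▸ hle
    · exact (hlt w hw).le
  rw [prod_eq_abs_norm, NumberField.Units.norm, Finset.prod_const_one] at this
  norm_num at this

end primitive

theorem Ideal.exists_pow_sub_one_mem {R : Type*} [CommRing R] (I : Ideal R) [Finite (R ⧸ I)]
    (u : Rˣ) : ∃ k, 0 < k ∧ (u : R) ^ k - 1 ∈ I := by
  set ū := Units.map (Ideal.Quotient.mk I : R →* R ⧸ I) u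
  refine ⟨orderOf ū, (isOfFinOrder_of_finite ū).orderOf_pos, ?_⟩
  rw [← Ideal.Quotient.eq, map_pow, map_one]
  have := congrArg Units.val (pow_orderOf_eq_one ū)
  rwa [Units.val_pow_eq_pow_val, Units.coe_map, Units.val_one] at this

theorem eventually_mul_pow_add_one_lt {x r c : ℝ} (hx : x < c) (hr₀ : 0 ≤ r) (hr : r < 1) :
    ∀ᶠ n : ℕ in atTop, x * (r ^ n + 1) < c :=
  (((tendsto_pow_atTop_nhds_zero_of_lt_one hr₀ hr).add_const 1).const_mul x).eventually_lt_const
    (by simpa using hx)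

theorem two_mul_norm_mul_le {b c z s : ℂ} (hs : ‖s‖ = 1) (h : 2 * c = z + s) :
    2 * ‖b * c‖ ≤ ‖b‖ * (‖z‖ + 1) :=
  calc 2 * ‖b * c‖ = ‖b‖ * ‖2 * c‖ := by rw [norm_mul, norm_mul, Complex.norm_two]; ring
    _ ≤ ‖b‖ * (‖z‖ + 1) := by
      rw [h, ← hs]; exact mul_le_mul_of_nonneg_left (norm_add_le _ _) (norm_nonneg _)

instance (K : IntermediateField ℚ ℝ) [FiniteDimensional ℚ K] : NumberField K := ⟨⟩

def IsPisot (K : IntermediateField ℚ ℝ) (θ : K) : Prop :=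
  IsIntegral ℤ θ ∧ 1 < (θ : ℝ) ∧ ∀ σ : K →+* ℂ, σ ≠ iotaK K → ‖σ θ‖ < 1

section real_field

variable {K : IntermediateField ℚ ℝ}

theorem norm_iotaK (x : K) : ‖iotaK K x‖ = |(x : ℝ)| := by
  rw [iotaK, RingHom.comp_apply, Complex.ofRealHom_eq_coe, Complex.norm_real, Real.norm_eq_abs]
  rfl

theorem conjugate_iotaK : ComplexEmbedding.conjugate (iotaK K) = iotaK K :=
  RingHom.ext fun _ => Complex.conj_ofReal _

theorem mk_ne_mk_iotaK {σ : K →+* ℂ} (hσ : σ ≠ iotaK K) : mk σ ≠ mk (iotaK K) := by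
  rw [Ne, eq_comm, mk_eq_iff, conjugate_iotaK, or_self]
  exact hσ.symm

theorem mem_pisotGen_iff [FiniteDimensional ℚ K] {θ : K} : θ ∈ pisotGen K ↔ IsPisot K θ := by
  refine ⟨fun ⟨hint, hθ, _, hσ⟩ => ⟨hint, hθ, hσ⟩, fun ⟨hint, hθ, hσ⟩ => ⟨hint, hθ, ?_, hσ⟩⟩
  refine adjoin_simple_eq_top_of_norm_lt (iotaK K) fun σ hσ' => ?_
  rw [norm_iotaK]
  exact (hσ σ hσ').trans (hθ.trans_le (le_abs_self _))

end real_field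

theorem exists_isPisot_two_dvd_sub_one (K : IntermediateField ℚ ℝ) [FiniteDimensional ℚ K] :
    ∃ v : 𝓞 K, IsPisot K v ∧ (2 : 𝓞 K) ∣ v - 1 := by
  by_cases hK : ∀ σ : K →+* ℂ, σ = iotaK K
  · refine ⟨3, ⟨RingOfIntegers.isIntegral_coe _, ?_, fun σ hσ => (hσ (hK σ)).elim⟩, 1, by norm_num⟩
    have h3 : (((3 : 𝓞 K) : K) : ℝ) = 3 :=
      (congrArg _ (map_ofNat (algebraMap (𝓞 K) K) 3)).trans (map_ofNat (algebraMap K ℝ) 3)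
    rw [h3]
    norm_num
  push Not at hK
  obtain ⟨σ₀, hσ₀⟩ := hK
  obtain ⟨u, hu₁, hu⟩ := exists_unit_one_lt_and_forall_lt_one (mk_ne_mk_iotaK hσ₀)
  have : Finite (𝓞 K ⧸ Ideal.span {(2 : 𝓞 K)}) :=
    Ideal.finiteQuotientOfFreeOfNeBot _ (by simp)
  obtain ⟨k, hk, hk2⟩ := Ideal.exists_pow_sub_one_mem (Ideal.span {(2 : 𝓞 K)}) u
  refine ⟨(u : 𝓞 K) ^ (2 * k), ⟨RingOfIntegers.isIntegral_coe _, ?_, fun σ hσ => ?_⟩, ?_⟩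
  · rw [apply, norm_iotaK] at hu₁
    have : ((((u : 𝓞 K) ^ (2 * k) : 𝓞 K) : K) : ℝ) = |(((u : 𝓞 K) : K) : ℝ)| ^ (2 * k) := by
      rw [pow_mul, pow_mul, sq_abs]; simp
    rw [this]
    exact one_lt_pow₀ hu₁ (by omega)
  · push_cast
    rw [map_pow, norm_pow, ← apply]
    exact pow_lt_one₀ (apply_nonneg _ _) (hu _ (mk_ne_mk_iotaK hσ)) (by omega)
  · rw [pow_mul']
    exact (Ideal.mem_span_singleton.mp hk2).trans (sub_one_dvd_pow_sub_one _ 2)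

theorem exists_isPisot_isPisot_add {K : IntermediateField ℚ ℝ} [FiniteDimensional ℚ K] {β : K}
    (hβ : β ∈ EK K) : ∃ θ, IsPisot K θ ∧ IsPisot K (θ + β) := by
  obtain ⟨hβint, hβpos, hβσ⟩ := hβ
  obtain ⟨v, ⟨-, hv, hvσ⟩, hv2⟩ := exists_isPisot_two_dvd_sub_one K
  choose c hc using fun n => hv2.trans (sub_one_dvd_pow_sub_one v n)
  have hcK : ∀ n, 2 * (c n : K) = (v : K) ^ n - 1 := fun n => by
    rw [← map_ofNat (algebraMap (𝓞 K) K) 2, ← map_mul, ← hc n]; push_cast; rfl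
  have hreal : ∀ᶠ n in atTop, 1 < ((β * c n : K) : ℝ) := by
    have hlim := (tendsto_atTop_add_const_right atTop (-1)
      (tendsto_pow_atTop_atTop_of_one_lt hv)).const_mul_atTop hβpos
    filter_upwards [hlim.eventually_gt_atTop 2] with n hn
    have h2 := congrArg (algebraMap K ℝ) (hcK n)
    simp only [map_mul, map_ofNat, map_sub, map_pow, map_one,
      IntermediateField.algebraMap_apply] at h2
    push_cast
    nlinarith
  have hconj : ∀ᶠ n in atTop, ∀ σ : K →+* ℂ, σ ≠ iotaK K → ‖σ β‖ * (‖σ v‖ ^ n + 1) < 2 :=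
    eventually_all.2 fun σ => by
      by_cases hσ : σ = iotaK K
      · exact Eventually.of_forall fun _ h => (h hσ).elim
      · filter_upwards [eventually_mul_pow_add_one_lt (hβσ σ hσ) (norm_nonneg _) (hvσ σ hσ)]
          with n hn _ using hn
  obtain ⟨n, hn, hnσ⟩ := (hreal.and hconj).exists
  have hσc : ∀ σ : K →+* ℂ, 2 * σ (c n) = σ v ^ n + -1 := fun σ => by
    rw [← sub_eq_add_neg, ← map_pow, ← map_one σ, ← map_sub, ← hcK, map_mul, map_ofNat]
  have hσc' : ∀ σ : K →+* ℂ, 2 * σ (c n + 1) = σ v ^ n + 1 := fun σ => by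
    rw [map_add, map_one, mul_add, hσc]; ring
  refine ⟨β * c n, ⟨hβint.mul (RingOfIntegers.isIntegral_coe _), hn, fun σ hσ => ?_⟩,
    ⟨(hβint.mul (RingOfIntegers.isIntegral_coe _)).add hβint, ?_, fun σ hσ => ?_⟩⟩
  · have := two_mul_norm_mul_le (b := σ β) (by simp) (hσc σ)
    rw [← map_mul, norm_pow] at this
    linarith [hnσ σ hσ]
  · push_cast at hn ⊢
    linarith
  · have := two_mul_norm_mul_le (b := σ β) (by simp) (hσc' σ)
    rw [← map_mul, mul_add, mul_one, norm_pow] at this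
    linarith [hnσ σ hσ]

theorem DK_subset_EK (K : IntermediateField ℚ ℝ) : DK K ⊆ EK K := by
  rintro _ ⟨θ, hθ, θ', hθ', hlt, rfl⟩
  refine ⟨hθ'.1.sub hθ.1, by push_cast; linarith, fun σ hσ => ?_⟩
  rw [map_sub]
  calc ‖σ θ' - σ θ‖ ≤ ‖σ θ'‖ + ‖σ θ‖ := norm_sub_le _ _
    _ < 1 + 1 := add_lt_add (hθ'.2.2.2 σ hσ) (hθ.2.2.2 σ hσ)
    _ = 2 := one_add_one_eq_two

theorem EK_subset_DK (K : IntermediateField ℚ ℝ) [FiniteDimensional ℚ K] : EK K ⊆ DK K := by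
  intro β hβ
  obtain ⟨θ, hθ, hθβ⟩ := exists_isPisot_isPisot_add hβ
  refine ⟨θ, mem_pisotGen_iff.mpr hθ, θ + β, mem_pisotGen_iff.mpr hθβ, ?_,
    (add_sub_cancel_left _ _).symm⟩
  push_cast
  linarith [hβ.2.1]

theorem pisotGen_nonempty (K : IntermediateField ℚ ℝ) [FiniteDimensional ℚ K] :
    (pisotGen K).Nonempty :=
  let ⟨v, hv, _⟩ := exists_isPisot_two_dvd_sub_one K
  ⟨v, mem_pisotGen_iff.mpr hv⟩

theorem pisotGen_sub_pisotGen (K : IntermediateField ℚ ℝ) (hK : (pisotGen K).Nonempty) :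
    pisotGen K - pisotGen K = -DK K ∪ {0} ∪ DK K := by
  ext x
  simp only [Set.mem_sub, Set.mem_union, Set.mem_neg, Set.mem_singleton_iff]
  constructor
  · rintro ⟨θ', hθ', θ, hθ, rfl⟩
    rcases lt_trichotomy (θ : ℝ) θ' with h | h | h
    · exact Or.inr ⟨θ, hθ, θ', hθ', h, rfl⟩
    · exact Or.inl (Or.inr (by rw [Subtype.coe_injective h, sub_self]))
    · exact Or.inl (Or.inl ⟨θ', hθ', θ, hθ, h, neg_sub _ _⟩)
  · rintro ((⟨θ, hθ, θ', hθ', -, h⟩ | rfl) | ⟨θ, hθ, θ', hθ', -, rfl⟩)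
    · exact ⟨θ, hθ, θ', hθ', by rw [← neg_sub, ← h, neg_neg]⟩
    · obtain ⟨θ, hθ⟩ := hK
      exact ⟨θ, hθ, θ, hθ, sub_self θ⟩
    · exact ⟨θ', hθ', θ, hθ, rfl⟩

/-- **Corollary 1.** For any real number field `K`, `E_K = D_K`; equivalently, the set of
differences `℘_K - ℘_K` equals `(-E_K) ∪ {0} ∪ E_K`. -/
theorem EK_eq_DK (K : IntermediateField ℚ ℝ) [FiniteDimensional ℚ K] :
    EK K = DK K ∧ pisotGen K - pisotGen K = -EK K ∪ {0} ∪ EK K := by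
  have hED : EK K = DK K := (EK_subset_DK K).antisymm (DK_subset_EK K)
  exact ⟨hED, hED ▸ pisotGen_sub_pisotGen K (pisotGen_nonempty K)⟩
end

section
/- Let K be a real algebraic number field of degree d = s + 2t ≥ 2, with embeddings σ_1 = id, the other real embeddings σ_2, ..., σ_s, and representatives σ_{s+1}, ..., σ_{s+t} of the pairs of complex-conjugate non-real embeddings. Then the set {(σ_2(θ), ..., σ_{s+t}(θ)) : θ ∈ ℘_K} is dense in [-1, 1]^{s-1} × D̄^t, where D̄ = {z ∈ ℂ : |z| ≤ 1} is the closed unit disc. -/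
open IntermediateField

/-!
Minkowski's theorem gives algebraic integers `u` that are `> 1` at the identity embedding and
arbitrarily small at every other embedding. The conjugation-compatible vectors in `ℂ^{K →+* ℂ}`
are exactly the real combinations of the images of an integral basis, so the image of `𝓞 K`
covers them up to a fixed distance `C`; covering `y / u` and multiplying back by `u` therefore
approximates `y` within `‖σ u‖ C` at every `σ ≠ id`. Adding a large power of `u` makes the
approximant exceed `1` while barely moving its other conjugates. Approximating a slightly
shrunken target keeps those conjugates inside the unit disc, and then the element is a Pisot
number generating `K`.
-/

open NumberField InfinitePlace Module
open scoped ComplexConjugate NNReal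

theorem norm_lt_one_of_norm_smul_sub_lt {E : Type*} [SeminormedAddCommGroup E] [NormedSpace ℝ E]
    {z w : E} {η : ℝ} (hz : ‖z‖ ≤ 1) (hη : η ≤ 1) (h : ‖(1 - η) • z - w‖ < η) : ‖w‖ < 1 := by
  have h_smul : ‖(1 - η) • z‖ ≤ 1 - η := by
    rw [norm_smul, Real.norm_of_nonneg (by linarith)]
    exact mul_le_of_le_one_right (by linarith) hz
  calc ‖w‖ ≤ ‖(1 - η) • z‖ + ‖(1 - η) • z - w‖ := norm_le_norm_add_norm_sub _ _
    _ < 1 := by linarith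

theorem norm_sub_lt_of_norm_smul_sub_lt {E : Type*} [SeminormedAddCommGroup E] [NormedSpace ℝ E]
    {z w : E} {η : ℝ} (hz : ‖z‖ ≤ 1) (h : ‖(1 - η) • z - w‖ < η) : ‖z - w‖ < 2 * η := by
  have hη : 0 < η := (norm_nonneg _).trans_lt h
  have h_smul : ‖z - (1 - η) • z‖ ≤ η := by
    rw [sub_smul, one_smul, sub_sub_cancel, norm_smul, Real.norm_of_nonneg hη.le]
    exact mul_le_of_le_one_right hη.le hz
  calc ‖z - w‖ ≤ ‖z - (1 - η) • z‖ + ‖(1 - η) • z - w‖ := norm_sub_le_norm_sub_add_norm_sub _ _ _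
    _ < 2 * η := by linarith

theorem norm_sum_sub_round_mul_le {ι : Type*} (s : Finset ι) (c : ι → ℝ) (z : ι → ℂ) :
    ‖∑ i ∈ s, (c i - round (c i)) * z i‖ ≤ ∑ i ∈ s, ‖z i‖ := by
  refine (norm_sum_le _ _).trans (Finset.sum_le_sum fun i _ => ?_)
  rw [norm_mul]
  refine mul_le_of_le_one_left (norm_nonneg _) ?_
  rw [← Complex.ofReal_intCast, ← Complex.ofReal_sub, Complex.norm_real, Real.norm_eq_abs]
  exact (abs_sub_round _).trans (by norm_num)

namespace NumberField

variable {K : Type*} [Field K]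

theorem eq_of_mk_eq_mk_ofReal {ρ : K →+* ℝ} {φ : K →+* ℂ}
    (h : InfinitePlace.mk φ = InfinitePlace.mk (Complex.ofRealHom.comp ρ)) :
    φ = Complex.ofRealHom.comp ρ := by
  rcases mk_eq_iff.mp h with h | h
  · exact h
  · ext x
    have := congrArg (conj ·) (RingHom.congr_fun h x)
    simpa [ComplexEmbedding.conjugate_coe_eq] using this

theorem forall_ne_norm_lt_iff (ρ : K →+* ℝ) (a : K) (r : ℝ) :
    (∀ φ : K →+* ℂ, φ ≠ Complex.ofRealHom.comp ρ → ‖φ a‖ < r) ↔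
      ∀ w : InfinitePlace K, w ≠ InfinitePlace.mk (Complex.ofRealHom.comp ρ) → w a < r := by
  refine ⟨fun h w hw => ?_, fun h φ hφ => h (InfinitePlace.mk φ) (mt eq_of_mk_eq_mk_ofReal hφ)⟩
  rw [← norm_embedding_eq]
  exact h _ fun h' => hw (by rw [← mk_embedding w, h'])

variable [NumberField K]

theorem exists_ne_zero_forall_ne_lt (w₀ : InfinitePlace K) {r : ℝ≥0} (hr : r ≠ 0) :
    ∃ a : 𝓞 K, a ≠ 0 ∧ ∀ w ≠ w₀, w a < r := by
  open mixedEmbedding in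
  obtain ⟨B, hB⟩ := ENNReal.exists_nat_mul_gt
    (ENNReal.coe_ne_zero.mpr (convexBodyLTFactor_ne_zero K)) (minkowskiBound_lt_top K 1).ne
  obtain ⟨g, hg_eq, hg_prod⟩ := adjust_f K (w₁ := w₀) (f := fun _ => r) B (fun _ _ => hr)
  obtain ⟨a, ha, ha_lt⟩ := exists_ne_zero_mem_ringOfIntegers_lt K (f := g)
    (by rwa [convexBodyLT_volume, hg_prod, mul_comm])
  exact ⟨a, ha, fun w hw => hg_eq w hw ▸ ha_lt w⟩

theorem exists_one_lt_forall_ne_lt (w₀ : InfinitePlace K) {r : ℝ} (hr : 0 < r) :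
    ∃ a : 𝓞 K, 1 < w₀ a ∧ ∀ w ≠ w₀, w a < r := by
  let s : ℝ≥0 := ⟨min r 1 / 2, by positivity⟩
  have hs : (s : ℝ) = min r 1 / 2 := rfl
  obtain ⟨a, ha, ha_lt⟩ := exists_ne_zero_forall_ne_lt w₀ (r := s)
    (ne_of_gt (NNReal.coe_pos.mp (by rw [hs]; positivity)))
  -- the product formula only gives `1 ≤ w₀ a`; doubling `a` makes it strict
  have h_one : 1 ≤ w₀ a := one_le_of_lt_one ha fun w hw =>
    (ha_lt w hw).trans_le (by rw [hs]; linarith [min_le_right r 1])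
  have h_two (w : InfinitePlace K) : w (2 * a : 𝓞 K) = 2 * w a := by
    have : ((2 * a : 𝓞 K) : K) = 2 * (a : K) := by norm_cast
    rw [this, map_mul, ← norm_embedding_eq w 2, map_ofNat]
    norm_num
  refine ⟨2 * a, by rw [h_two]; linarith, fun w hw => ?_⟩
  rw [h_two]
  linarith [ha_lt w hw, min_le_left r 1]

theorem exists_one_lt_forall_ne_norm_lt (ρ : K →+* ℝ) {r : ℝ} (hr : 0 < r) :
    ∃ u : 𝓞 K, 1 < ρ u ∧ ∀ φ : K →+* ℂ, φ ≠ Complex.ofRealHom.comp ρ → ‖φ u‖ < r := by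
  obtain ⟨a, ha_gt, ha_lt⟩ :=
    exists_one_lt_forall_ne_lt (InfinitePlace.mk (Complex.ofRealHom.comp ρ)) hr
  rw [← forall_ne_norm_lt_iff] at ha_lt
  rw [apply, RingHom.comp_apply, Complex.ofRealHom_eq_coe, Complex.norm_real,
    Real.norm_eq_abs] at ha_gt
  rcases lt_abs.mp ha_gt with h | h
  · exact ⟨a, h, ha_lt⟩
  · exact ⟨-a, by simpa using h, fun φ hφ => by simpa using ha_lt φ hφ⟩

theorem adjoin_eq_top_of_forall_ne_norm_lt_one (ρ : K →+* ℝ) {θ : 𝓞 K} (hθ : 1 < ρ θ)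
    (h : ∀ φ : K →+* ℂ, φ ≠ Complex.ofRealHom.comp ρ → ‖φ θ‖ < 1) :
    IntermediateField.adjoin ℚ {(θ : K)} = ⊤ := by
  have hθ₀ : θ ≠ 0 := by rintro rfl; norm_num at hθ
  have h_real : ComplexEmbedding.IsReal (Complex.ofRealHom.comp ρ) :=
    ComplexEmbedding.isReal_iff.mpr (by ext; simp [ComplexEmbedding.conjugate_coe_eq])
  exact is_primitive_element_of_infinitePlace_lt hθ₀ ((forall_ne_norm_lt_iff ρ θ 1).mp h)
    (Or.inl ⟨_, h_real, rfl⟩)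

theorem exists_real_coeffs_of_conj
    (x : (K →+* ℂ) → ℂ) (hx : ∀ φ : K →+* ℂ, x ((starRingEnd ℂ).comp φ) = conj (x φ)) :
    ∃ c : Free.ChooseBasisIndex ℤ (𝓞 K) → ℝ,
      ∀ φ : K →+* ℂ, x φ = ∑ i, c i * φ (RingOfIntegers.basis K i) := by
  let B := canonicalEmbedding.latticeBasis K
  have hB (i) : B i = canonicalEmbedding K (RingOfIntegers.basis K i) := by
    simp [B, integralBasis_apply]
  obtain ⟨c, hc⟩ : ∃ c, B.repr x = c := ⟨_, rfl⟩
  have hx_apply (φ : K →+* ℂ) : x φ = ∑ i, c i * φ (RingOfIntegers.basis K i) := by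
    conv_lhs => rw [← B.sum_repr x]
    simp [hB, hc]
  have hx_conj : x = ∑ i, conj (c i) • B i := by
    funext φ
    rw [← Complex.conj_conj (x φ), ← hx, hx_apply]
    simp [hB]
  have hc_real (i) : conj (c i) = c i := by
    have := congrArg (fun v => B.repr v i) hx_conj
    simp only [hc, B.repr_sum_self] at this
    exact this.symm
  exact ⟨fun i => (c i).re, fun φ => by simp_rw [hx_apply, Complex.conj_eq_iff_re.mp (hc_real _)]⟩

theorem exists_forall_norm_sub_le_of_conj :
    ∃ C : ℝ, ∀ x : (K →+* ℂ) → ℂ, (∀ φ : K →+* ℂ, x ((starRingEnd ℂ).comp φ) = conj (x φ)) →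
      ∃ θ : 𝓞 K, ∀ φ : K →+* ℂ, ‖x φ - φ θ‖ ≤ C := by
  let b := RingOfIntegers.basis K
  refine ⟨∑ φ : K →+* ℂ, ∑ i, ‖φ (b i)‖, fun x hx => ?_⟩
  obtain ⟨c, hc⟩ := exists_real_coeffs_of_conj x hx
  refine ⟨∑ i, round (c i) • b i, fun φ => ?_⟩
  have h_diff :
      x φ - φ (∑ i, round (c i) • b i : 𝓞 K) = ∑ i, (c i - round (c i)) * φ (b i) := by
    simp [b, hc, sub_mul, zsmul_eq_mul]
  rw [h_diff]
  exact (norm_sum_sub_round_mul_le _ _ _).trans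
    (Finset.single_le_sum (f := fun φ : K →+* ℂ => ∑ i, ‖φ (b i)‖)
      (fun _ _ => Finset.sum_nonneg fun _ _ => norm_nonneg _) (Finset.mem_univ φ))

theorem exists_one_lt_forall_ne_norm_sub_lt (ρ : K →+* ℝ) (y : (K →+* ℂ) → ℂ)
    (hy : ∀ φ : K →+* ℂ, y ((starRingEnd ℂ).comp φ) = conj (y φ)) {δ : ℝ} (hδ : 0 < δ) :
    ∃ θ : 𝓞 K, 1 < ρ θ ∧ ∀ φ : K →+* ℂ, φ ≠ Complex.ofRealHom.comp ρ → ‖y φ - φ θ‖ < δ := by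
  obtain ⟨C, hC⟩ := exists_forall_norm_sub_le_of_conj (K := K)
  obtain ⟨u, hu_gt, hu_lt⟩ := exists_one_lt_forall_ne_norm_lt ρ
    (r := min 1 (δ / (|C| + 1))) (by positivity)
  have hu₀ (φ : K →+* ℂ) : φ u ≠ 0 := by
    rw [map_ne_zero, ne_eq, RingOfIntegers.coe_eq_zero_iff]
    rintro rfl
    norm_num at hu_gt
  obtain ⟨θ, hθ⟩ := hC (fun φ => y φ / φ u) fun φ => by simp [hy]
  obtain ⟨n, hn⟩ := pow_unbounded_of_one_lt (1 - ρ (u * θ)) hu_gt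
  refine ⟨u * θ + u ^ (n + 1), ?_, fun φ hφ => ?_⟩
  · have h_pow : ρ u ^ n ≤ ρ u ^ (n + 1) := pow_le_pow_right₀ hu_gt.le n.le_succ
    push_cast
    rw [map_add, map_pow]
    linarith
  · set t := ‖φ u‖
    have ht : t < min 1 (δ / (|C| + 1)) := hu_lt φ hφ
    have h_diff :
        y φ - φ ↑(u * θ + u ^ (n + 1)) = φ u * (y φ / φ u - φ θ) - φ u ^ (n + 1) := by
      push_cast
      rw [map_add, map_mul, map_pow, mul_sub, mul_div_cancel₀ _ (hu₀ φ)]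
      ring
    calc ‖y φ - φ ↑(u * θ + u ^ (n + 1))‖
        ≤ t * ‖y φ / φ u - φ θ‖ + t ^ (n + 1) := by
          rw [h_diff, ← norm_mul, ← norm_pow]
          exact norm_sub_le _ _
      _ ≤ t * |C| + t := by
          gcongr
          · exact (hθ φ).trans (le_abs_self C)
          · exact pow_le_of_le_one (norm_nonneg _) (ht.le.trans (min_le_left _ _)) n.succ_ne_zero
      _ < δ := by
          have := (lt_div_iff₀ (by positivity)).mp (ht.trans_le (min_le_right _ _))
          linarith

end NumberField

instance inst_s3 (K : IntermediateField ℚ ℝ) [FiniteDimensional ℚ K] : NumberField K := ⟨⟩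

theorem pisotGen_conjugates_dense_general (K : IntermediateField ℚ ℝ) [FiniteDimensional ℚ K]
    (x : (↥K →+* ℂ) → ℂ)
    (hx₁ : ∀ σ : ↥K →+* ℂ, σ ≠ iotaK K → ‖x σ‖ ≤ 1)
    (hx₂ : ∀ σ : ↥K →+* ℂ, x ((starRingEnd ℂ).comp σ) = starRingEnd ℂ (x σ))
    (ε : ℝ) (hε : 0 < ε) :
    ∃ θ ∈ pisotGen K, ∀ σ : ↥K →+* ℂ, σ ≠ iotaK K → ‖x σ - σ θ‖ < ε := by
  set η := min ε 1 / 2 with hη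
  obtain ⟨θ, hθ_gt, hθ_approx⟩ := exists_one_lt_forall_ne_norm_sub_lt (algebraMap K ℝ)
    (fun σ => (1 - η) • x σ) (fun σ => by simp [hx₂]) (by positivity : 0 < η)
  have hθ_lt (σ) (hσ : σ ≠ iotaK K) : ‖σ θ‖ < 1 :=
    norm_lt_one_of_norm_smul_sub_lt (hx₁ σ hσ) (by linarith [min_le_right ε 1, hη])
      (hθ_approx σ hσ)
  refine ⟨θ, ⟨RingOfIntegers.isIntegral_coe θ, hθ_gt,
    adjoin_eq_top_of_forall_ne_norm_lt_one _ hθ_gt hθ_lt, hθ_lt⟩, fun σ hσ => ?_⟩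
  calc ‖x σ - σ θ‖ < 2 * η := norm_sub_lt_of_norm_smul_sub_lt (hx₁ σ hσ) (hθ_approx σ hσ)
    _ ≤ ε := by linarith [min_le_left ε 1, hη]

/-- **Corollary 2.** Let `K` be a real number field of degree `≥ 2`.  A point of
`[-1,1]^{s-1} × D̄^t` is encoded as a function `x` assigning to each embedding
`σ : K →+* ℂ` a complex number of modulus `≤ 1` (for `σ ≠` identity), compatible with
complex conjugation; this forces `x σ ∈ [-1,1]` for real `σ`, and the data of `x` on the
embeddings `≠` identity is exactly a point of `[-1,1]^{s-1} × D̄^t`.  Every such point is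
approximated within any `ε > 0` by `(σ₂ θ, …, σ_{s+t} θ)` for some `θ ∈ ℘_K`, i.e. the set
`{(σ₂ θ, …, σ_{s+t} θ) : θ ∈ ℘_K}` is dense in `[-1,1]^{s-1} × D̄^t`. -/
theorem pisotGen_conjugates_dense (K : IntermediateField ℚ ℝ) [FiniteDimensional ℚ K]
    (hd : 2 ≤ Module.finrank ℚ ↥K)
    (x : (↥K →+* ℂ) → ℂ)
    (hx₁ : ∀ σ : ↥K →+* ℂ, σ ≠ iotaK K → ‖x σ‖ ≤ 1)
    (hx₂ : ∀ σ : ↥K →+* ℂ, x ((starRingEnd ℂ).comp σ) = starRingEnd ℂ (x σ))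
    (ε : ℝ) (hε : 0 < ε) :
    ∃ θ ∈ pisotGen K, ∀ σ : ↥K →+* ℂ, σ ≠ iotaK K → ‖x σ - σ θ‖ < ε :=
  pisotGen_conjugates_dense_general K x hx₁ hx₂ ε hε
end

section
/- Let K be a real algebraic number field and let ϵ ∈ (0, 1]. Then the set of ϵ-Pisot numbers θ with ℚ(θ) = K is relatively dense in [1, ∞); that is, there exists ρ' > 0 such that every subinterval of [1, ∞) of the form (x, x + ρ'] contains an ϵ-Pisot number generating K. -/
/-!
Minkowski's convex body theorem gives a nonzero `β ∈ 𝓞 K` that is arbitrarily small at every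
infinite place other than the identity one, and since `𝓞 K` is a lattice in the mixed space,
some `g ∈ 𝓞 K` lies within a fixed distance `D` of any point of it. Taking that point to be
`s / β` at the identity place and `0` elsewhere, `θ = β g` lies within `|β| D` of the arbitrary
real number `s` and is still small at all other places. Such a `θ > 1` generates `K`: every other
embedding is smaller than `1` at `θ`, so none agrees with the identity there.
-/

open IntermediateField

namespace NumberField

open InfinitePlace mixedEmbedding
open scoped Classical

variable {F : Type*} [Field F] [NumberField F]

theorem exists_ne_zero_forall_ne_lt_s5 (w₀ : InfinitePlace F) {δ : ℝ} (hδ : 0 < δ) :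
    ∃ β : 𝓞 F, β ≠ 0 ∧ ∀ w, w ≠ w₀ → w (β : F) < δ := by
  set B : NNReal := (minkowskiBound F 1).toNNReal + 1
  obtain ⟨f, hf, hf_prod⟩ := adjust_f F (w₁ := w₀) (f := fun _ ↦ δ.toNNReal) B
    (fun _ _ ↦ by simpa using hδ)
  have hvol : minkowskiBound F ↑1 < MeasureTheory.volume (convexBodyLT F f) := by
    rw [convexBodyLT_volume, hf_prod]
    calc minkowskiBound F ↑1 < ((minkowskiBound F 1).toNNReal : ENNReal) + 1 := by
          rw [ENNReal.coe_toNNReal (minkowskiBound_lt_top F 1).ne]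
          exact ENNReal.lt_add_right (minkowskiBound_lt_top F 1).ne one_ne_zero
      _ = B := by push_cast [B]; rfl
      _ ≤ convexBodyLTFactor F * B := by
          exact_mod_cast le_mul_of_one_le_left zero_le (one_le_convexBodyLTFactor F)
  obtain ⟨β, hβ, hlt⟩ := exists_ne_zero_mem_ringOfIntegers_lt F hvol
  refine ⟨β, hβ, fun w hw ↦ ?_⟩
  simpa [hf w hw, hδ.le] using hlt w

variable (F) in
theorem exists_norm_sub_mixedEmbedding_le :
    ∃ D : ℝ, 0 ≤ D ∧ ∀ v : mixedSpace F, ∃ g : 𝓞 F, ‖v - mixedEmbedding F g‖ ≤ D := by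
  set b := latticeBasis F
  refine ⟨∑ i, ‖b i‖, by positivity, fun v ↦ ?_⟩
  obtain ⟨g, hg⟩ : (ZSpan.floor b v : mixedSpace F) ∈ mixedEmbedding.integerLattice F :=
    (mem_span_latticeBasis F).mp (SetLike.coe_mem _)
  refine ⟨g, ?_⟩
  have : v - mixedEmbedding F g = ZSpan.fract b v := by rw [ZSpan.fract_apply, ← hg]; rfl
  exact this ▸ ZSpan.norm_fract_le b v

theorem exists_abs_sub_le_forall_ne_le {w₀ : InfinitePlace F} (hw₀ : IsReal w₀) :
    ∃ D : ℝ, 0 ≤ D ∧ ∀ s : ℝ, ∃ g : 𝓞 F,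
      |embedding_of_isReal hw₀ (g : F) - s| ≤ D ∧ ∀ w, w ≠ w₀ → w (g : F) ≤ D := by
  obtain ⟨D, hD, hcover⟩ := exists_norm_sub_mixedEmbedding_le F
  refine ⟨D, hD, fun s ↦ ?_⟩
  set v : mixedSpace F := (Pi.single ⟨w₀, hw₀⟩ s, 0) with hv
  obtain ⟨g, hg⟩ := hcover v
  have hnorm (w : InfinitePlace F) : normAtPlace w (mixedEmbedding F g - v) ≤ D := by
    rw [← normAtPlace_neg, neg_sub]
    refine le_trans ?_ hg
    rw [norm_eq_sup'_normAtPlace]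
    exact Finset.le_sup' (fun w ↦ normAtPlace w _) (Finset.mem_univ w)
  refine ⟨g, ?_, fun w hw ↦ ?_⟩
  · simpa [normAtPlace_apply_of_isReal hw₀, hv, mixedEmbedding_apply_isReal] using hnorm w₀
  · have hv_zero : normAtPlace w v = 0 := by
      rcases isReal_or_isComplex w with hw' | hw'
      · simp [normAtPlace_apply_of_isReal hw', hv, hw]
      · simp [normAtPlace_apply_of_isComplex hw', hv]
    calc w (g : F) = normAtPlace w (mixedEmbedding F g - v + v) := by
          rw [sub_add_cancel, normAtPlace_apply]
      _ ≤ D := by linarith [normAtPlace_add_le w (mixedEmbedding F g - v) v, hnorm w]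

theorem exists_mem_Ioc_forall_ne_lt {w₀ : InfinitePlace F} (hw₀ : IsReal w₀) {ϵ : ℝ}
    (hϵ : 0 < ϵ) : ∃ ρ : ℝ, 0 < ρ ∧ ∀ x : ℝ, ∃ θ : 𝓞 F,
      embedding_of_isReal hw₀ (θ : F) ∈ Set.Ioc x (x + ρ) ∧ ∀ w, w ≠ w₀ → w (θ : F) < ϵ := by
  obtain ⟨D, hD, happrox⟩ := exists_abs_sub_le_forall_ne_le hw₀
  obtain ⟨β, hβ, hβsmall⟩ := exists_ne_zero_forall_ne_lt_s5 w₀ (δ := ϵ / (D + 1)) (by positivity)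
  set ι := embedding_of_isReal hw₀
  have hιβ : ι β ≠ 0 := (map_ne_zero ι).mpr (RingOfIntegers.coe_ne_zero_iff.mpr hβ)
  set ρ := |ι β| * D
  refine ⟨2 * ρ + 1, by positivity, fun x ↦ ?_⟩
  obtain ⟨g, hg₀, hg⟩ := happrox ((x + ρ + 1) / ι β)
  refine ⟨β * g, ?_, fun w hw ↦ ?_⟩
  · have hclose : |ι ((β * g : 𝓞 F) : F) - (x + ρ + 1)| ≤ ρ :=
      calc |ι ((β * g : 𝓞 F) : F) - (x + ρ + 1)| = |ι β| * |ι g - (x + ρ + 1) / ι β| := by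
            rw [← abs_mul, mul_sub, mul_div_cancel₀ _ hιβ]; push_cast [map_mul]; rfl
        _ ≤ ρ := mul_le_mul_of_nonneg_left hg₀ (abs_nonneg _)
    constructor <;> linarith [abs_le.mp hclose]
  · calc w ((β * g : 𝓞 F) : F) = w β * w g := by push_cast [map_mul]; rfl
      _ ≤ ϵ / (D + 1) * D := mul_le_mul (hβsmall w hw).le (hg w hw) (apply_nonneg _ _)
          (by positivity)
      _ < ϵ := by
          rw [div_mul_eq_mul_div, div_lt_iff₀ (by positivity)]
          nlinarith

end NumberField

/-- **Corollary 4** (Fan–Schmeling).  For `ϵ ∈ (0,1]`, the set of `ϵ`-Pisot numbers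
generating the real number field `K` (algebraic integers `θ ∈ K` with `θ > 1`,
`ℚ(θ) = K`, and `|σ θ| < ϵ` for every embedding `σ` of `K` into `ℂ` other than the
identity) is relatively dense in `[1, ∞)`: there is `ρ' > 0` such that every interval
`(x, x + ρ']` with `x ≥ 1` contains such a number. -/
theorem epsPisotGen_relDense (K : IntermediateField ℚ ℝ) [FiniteDimensional ℚ K]
    (ϵ : ℝ) (hϵ : ϵ ∈ Set.Ioc (0 : ℝ) 1) :
    ∃ ρ' : ℝ, 0 < ρ' ∧ ∀ x : ℝ, 1 ≤ x →
      ∃ θ : ↥K, IsIntegral ℤ θ ∧ 1 < (θ : ℝ) ∧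
        IntermediateField.adjoin ℚ ({θ} : Set ↥K) = ⊤ ∧
        (∀ σ : ↥K →+* ℂ, σ ≠ iotaK K → ‖σ θ‖ < ϵ) ∧
        x < (θ : ℝ) ∧ (θ : ℝ) ≤ x + ρ' := by
  open NumberField InfinitePlace in
  have : NumberField K := { to_charZero := inferInstance }
  have hreal : ComplexEmbedding.IsReal (iotaK K) :=
    ComplexEmbedding.isReal_iff.mpr (RingHom.ext fun _ ↦ Complex.conj_ofReal _)
  have hw₀ : IsReal (mk (iotaK K)) := ⟨_, hreal, rfl⟩
  have hι (a : K) : embedding_of_isReal hw₀ a = (a : ℝ) := Complex.ofReal_injective <| by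
    rw [embedding_of_isReal_apply, embedding_mk_eq_of_isReal hreal]; rfl
  obtain ⟨ρ, hρ, hdense⟩ := exists_mem_Ioc_forall_ne_lt hw₀ hϵ.1
  refine ⟨ρ, hρ, fun x hx ↦ ?_⟩
  obtain ⟨θ, ⟨hxθ, hθx⟩, hsmall⟩ := hdense x
  rw [hι] at hxθ hθx
  have hθ : θ ≠ 0 := by rintro rfl; simp at hxθ; linarith
  refine ⟨θ, θ.isIntegral_coe, by linarith, ?_, fun σ hσ ↦ ?_, hxθ, hθx⟩
  · exact is_primitive_element_of_infinitePlace_lt hθ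
      (fun w hw ↦ (hsmall w hw).trans_le hϵ.2) (Or.inl hw₀)
  · refine hsmall (mk σ) fun h ↦ hσ ?_
    rcases mk_eq_iff.mp h with h | h
    · exact h
    · rw [← ComplexEmbedding.isReal_iff.mp hreal, ← h, ComplexEmbedding.conjugate, star_star]
end
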